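/- For any integer n ≥ 3 and elements α_1, …, α_n of a field (or commutative ring), the determinant of the n×n matrix whose rows are (1,…,1), (α_1,…,α_n), (α_1^2,…,α_n^2), …, (α_1^{n−2},…,α_n^{n−2}), and (α_1^{n+1},…,α_n^{n+1}) equals ((Σ_{i=1}^n α_i)^2 − Σ_{1≤i<j≤n} α_i α_j) · Π_{1≤i<j≤n}(α_j − α_i). -/

import Mathlib

/-!
Let `P = ∏ⱼ (X - αⱼ)` and `r = X^(n+1) - (X + e₁) P`, where `e₁ = ∑ αᵢ`. Then `r` agrees
with `X^(n+1)` at every `αⱼ` and has degree `< n`, so the matrix is `Vᵀ` times the coefficient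
matrix of `1, X, …, X^(n-2), r`, which is upper triangular with diagonal `1, …, 1, r_(n-1)`.
Vieta's formulas for `P` give `r_(n-1) = e₁² - e₂`.
-/

open Polynomial Finset Matrix

theorem Finset.sum_powersetCard_two_prod {ι R : Type*} [Fintype ι] [LinearOrder ι]
    [LocallyFiniteOrderTop ι] [CommSemiring R] (f : ι → R) :
    ∑ t ∈ powersetCard 2 univ, ∏ i ∈ t, f i = ∑ i, ∑ j ∈ Ioi i, f i * f j := by
  rw [sum_sigma']
  symm
  refine sum_bij (fun x _ => {x.1, x.2}) ?_ ?_ ?_ ?_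
  · rintro ⟨i, j⟩ h
    simp only [mem_sigma, mem_Ioi] at h
    simp [card_pair h.2.ne]
  · rintro ⟨i, j⟩ h ⟨k, l⟩ h' e
    simp only [mem_sigma, mem_Ioi] at h h'
    have hi : i ∈ ({k, l} : Finset ι) := e ▸ by simp
    have hj : j ∈ ({k, l} : Finset ι) := e ▸ by simp
    have hk : k ∈ ({i, j} : Finset ι) := e ▸ by simp
    simp only [mem_insert, mem_singleton] at hi hj hk
    grind
  · intro t ht
    obtain ⟨x, y, hxy, rfl⟩ := card_eq_two.mp (mem_powersetCard.mp ht).2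
    rcases hxy.lt_or_gt with h | h
    · exact ⟨⟨x, y⟩, by simpa using h, rfl⟩
    · exact ⟨⟨y, x⟩, by simpa using h, pair_comm _ _⟩
  · rintro ⟨i, j⟩ h
    simp only [mem_sigma, mem_Ioi] at h
    exact (prod_pair h.2.ne).symm

namespace Polynomial

theorem prod_X_sub_C_coeff_card_sub_two {ι R : Type*} [CommRing R] (s : Finset ι)
    (f : ι → R) (hs : 2 ≤ #s) :
    (∏ i ∈ s, (X - C (f i))).coeff (#s - 2) = ∑ t ∈ s.powersetCard 2, ∏ i ∈ t, f i := by
  have hprod : ∏ i ∈ s, (X - C (f i)) = ((s.val.map f).map fun x => X - C x).prod := by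
    rw [Multiset.map_map]; rfl
  rw [hprod, Multiset.prod_X_sub_C_coeff _ (by simp), Multiset.card_map, card_val,
    Nat.sub_sub_self hs, esymm_map_val]
  simp

section Reduction

variable {R : Type*} [CommRing R] {P : R[X]} {n : ℕ}

theorem coeff_X_pow_succ_sub_mul (c : R) (k : ℕ) :
    (X ^ (n + 1) - (X - C c) * P).coeff (k + 1) =
      (if k = n then 1 else 0) - P.coeff k + c * P.coeff (k + 1) := by
  simp only [sub_mul, coeff_sub, coeff_X_pow, Nat.add_right_cancel_iff, coeff_X_mul,
    coeff_C_mul]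
  ring

theorem natDegree_X_pow_succ_sub_mul_lt (hP : P.Monic) (hdeg : P.natDegree = n) (hn : 1 ≤ n) :
    (X ^ (n + 1) - (X - C (P.coeff (n - 1))) * P).natDegree < n := by
  suffices (X ^ (n + 1) - (X - C (P.coeff (n - 1))) * P).natDegree ≤ n - 1 by omega
  rw [natDegree_le_iff_coeff_eq_zero]
  intro k hk
  obtain ⟨k, rfl⟩ : ∃ m, k = m + 1 := ⟨k - 1, by omega⟩
  have hlead : P.coeff n = 1 := hdeg ▸ hP.coeff_natDegree
  have hzero : ∀ m, n < m → P.coeff m = 0 := fun m hm =>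
    coeff_eq_zero_of_natDegree_lt (by omega)
  rw [coeff_X_pow_succ_sub_mul]
  rcases (show k = n - 1 ∨ k = n ∨ n < k by omega) with hk | hk | hk
  · rw [hk, if_neg (show n - 1 ≠ n by omega), Nat.sub_add_cancel hn, hlead]; ring
  · rw [hk, if_pos rfl, hlead, hzero (n + 1) (by omega)]; ring
  · rw [if_neg (show k ≠ n by omega), hzero k hk, hzero (k + 1) (by omega)]; ring

theorem coeff_X_pow_succ_sub_mul_pred (hn : 2 ≤ n) :
    (X ^ (n + 1) - (X - C (P.coeff (n - 1))) * P).coeff (n - 1) =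
      P.coeff (n - 1) ^ 2 - P.coeff (n - 2) := by
  obtain ⟨m, rfl⟩ : ∃ m, n = m + 2 := ⟨n - 2, by omega⟩
  rw [show m + 2 - 1 = m + 1 by omega, coeff_X_pow_succ_sub_mul,
    if_neg (show m ≠ m + 2 by omega), Nat.add_sub_cancel]
  ring

end Reduction

end Polynomial

theorem Matrix.det_vandermonde_lastRow_eval {R : Type*} [CommRing R] {n : ℕ} (α : Fin n → R)
    (q : R[X]) (hq : q.natDegree < n) :
    (of fun i j : Fin n => if (i : ℕ) = n - 1 then q.eval (α j) else α j ^ (i : ℕ)).det =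
      q.coeff (n - 1) * ∏ i, ∏ j ∈ Ioi i, (α j - α i) := by
  set p : Fin n → R[X] := fun j => if (j : ℕ) = n - 1 then q else X ^ (j : ℕ) with hp
  have hdeg : ∀ j, (p j).natDegree ≤ j := by
    intro j
    by_cases hj : (j : ℕ) = n - 1
    · simp only [hp, if_pos hj]; omega
    · simp only [hp, if_neg hj, natDegree_X_pow_le]
  have htriang : (of fun i j : Fin n => (p j).coeff i).IsUpperTriangular := by
    intro i j (hji : (j : ℕ) < i)
    have hj : (j : ℕ) ≠ n - 1 := by omega
    simp [hp, hj, coeff_X_pow, hji.ne']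
  have hdiag : ∏ i : Fin n, (p i).coeff i = q.coeff (n - 1) := by
    obtain ⟨m, rfl⟩ : ∃ m, n = m + 1 := ⟨n - 1, by omega⟩
    rw [Fin.prod_univ_castSucc, prod_eq_one fun i _ => by simp [hp, i.isLt.ne]]
    simp [hp]
  have hrows : (of fun i j : Fin n => if (i : ℕ) = n - 1 then q.eval (α j) else α j ^ (i : ℕ)) =
      (of fun i j => (p j).eval (α i))ᵀ := by
    ext i j
    by_cases hi : (i : ℕ) = n - 1 <;> simp [hp, hi]
  rw [hrows, det_transpose,
    eval_matrixOfPolynomials_eq_vandermonde_mul_matrixOfPolynomials α p hdeg, det_mul,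
    det_vandermonde, det_of_isUpperTriangular htriang]
  simp only [of_apply, hdiag, mul_comm]

/-- Vandermonde-type determinant in which the row of `(n-1)`-st powers is replaced by the
row of `(n+1)`-st powers: it equals
`((∑ α_i)² - ∑_{i<j} α_i α_j) · ∏_{i<j} (α_j - α_i)`. -/
theorem stmt_13 (R : Type*) [CommRing R] (n : ℕ) (hn : 3 ≤ n) (α : Fin n → R) :
    (Matrix.of fun i j : Fin n =>
        α j ^ (if (i : ℕ) = n - 1 then n + 1 else (i : ℕ))).det =
      ((∑ i, α i) ^ 2 - ∑ i, ∑ j ∈ Finset.Ioi i, α i * α j) *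
        ∏ i, ∏ j ∈ Finset.Ioi i, (α j - α i) := by
  nontriviality R
  set P : R[X] := ∏ j, (X - C (α j)) with hP
  have hmonic : P.Monic := monic_prod_of_monic _ _ fun j _ => monic_X_sub_C (α j)
  have hdeg : P.natDegree = n := by simp [hP]
  have hroot : ∀ j, P.eval (α j) = 0 := fun j => by
    simpa [hP, eval_prod] using prod_eq_zero (mem_univ j) (by simp)
  have hcoeff₁ : P.coeff (n - 1) = -∑ i, α i := by
    simpa using prod_X_sub_C_coeff_card_pred univ α (by simp; omega)
  have hcoeff₂ : P.coeff (n - 2) = ∑ i, ∑ j ∈ Ioi i, α i * α j := by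
    simpa [sum_powersetCard_two_prod] using
      prod_X_sub_C_coeff_card_sub_two univ α (by simp; omega)
  set r := X ^ (n + 1) - (X - C (P.coeff (n - 1))) * P
  have hrows : (of fun i j : Fin n => α j ^ (if (i : ℕ) = n - 1 then n + 1 else (i : ℕ))) =
      of fun i j : Fin n => if (i : ℕ) = n - 1 then r.eval (α j) else α j ^ (i : ℕ) := by
    ext i j
    by_cases hi : (i : ℕ) = n - 1 <;> simp [r, hi, hroot]
  rw [hrows, det_vandermonde_lastRow_eval α r
      (natDegree_X_pow_succ_sub_mul_lt hmonic hdeg (by omega)),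
    coeff_X_pow_succ_sub_mul_pred (by omega), hcoeff₁, hcoeff₂, neg_sq]
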